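/- Let M be a (2m+1)×(2m+1) real symmetric centrosymmetric matrix (i.e., JMJ = M, where J is the exchange matrix), written in block form M = [[B, x, Cᵀ],[xᵀ, q, xᵀJ],[C, Jx, JBJ]] with B, C being m×m blocks, x an m-vector, and q a scalar. Then M is orthogonally similar to the block-diagonal matrix diag(B − JC, [[B + JC, √2·x],[√2·xᵀ, q]]); in particular, the multiset of eigenvalues of M equals the union of the eigenvalues of B − JC and of the (m+1)×(m+1) matrix [[B + JC, √2 x],[√2 xᵀ, q]]. -/
import Mathlib

open Matrix

/-- The `m × m` exchange matrix: ones on the anti-diagonal, zeros elsewhere. -/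
def exchangeMatrix (m : ℕ) : Matrix (Fin m) (Fin m) ℝ :=
  Matrix.of fun i j => if j = i.rev then 1 else 0

/-- The `(2m+1) × (2m+1)` symmetric centrosymmetric matrix in block form
`M = [[B, x, Cᵀ], [xᵀ, q, xᵀJ], [C, Jx, JBJ]]`. -/
def centroMatrix (m : ℕ) (B C : Matrix (Fin m) (Fin m) ℝ) (x : Fin m → ℝ) (q : ℝ) :
    Matrix (Fin m ⊕ (Unit ⊕ Fin m)) (Fin m ⊕ (Unit ⊕ Fin m)) ℝ :=
  Matrix.of fun p r =>
    match p, r with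
    | Sum.inl i, Sum.inl j => B i j
    | Sum.inl i, Sum.inr (Sum.inl _) => x i
    | Sum.inl i, Sum.inr (Sum.inr j) => Cᵀ i j
    | Sum.inr (Sum.inl _), Sum.inl j => x j
    | Sum.inr (Sum.inl _), Sum.inr (Sum.inl _) => q
    | Sum.inr (Sum.inl _), Sum.inr (Sum.inr j) => x j.rev
    | Sum.inr (Sum.inr i), Sum.inl j => C i j
    | Sum.inr (Sum.inr i), Sum.inr (Sum.inl _) => x i.rev
    | Sum.inr (Sum.inr i), Sum.inr (Sum.inr j) => B i.rev j.rev

/-- The `(m+1) × (m+1)` block `[[B + JC, √2·x], [√2·xᵀ, q]]`. -/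
noncomputable def cantoniSmall (m : ℕ) (B C : Matrix (Fin m) (Fin m) ℝ)
    (x : Fin m → ℝ) (q : ℝ) : Matrix (Fin m ⊕ Unit) (Fin m ⊕ Unit) ℝ :=
  Matrix.of fun p r =>
    match p, r with
    | Sum.inl i, Sum.inl j => (B + exchangeMatrix m * C) i j
    | Sum.inl i, Sum.inr _ => Real.sqrt 2 * x i
    | Sum.inr _, Sum.inl j => Real.sqrt 2 * x j
    | Sum.inr _, Sum.inr _ => q

section Aux

open Polynomial

lemma charpoly_conj_orth {n : Type*} [Fintype n] [DecidableEq n] (U A : Matrix n n ℝ)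
    (h : U * Uᵀ = 1) : (U * A * Uᵀ).charpoly = A.charpoly := by
  have hmap : (U.map (C : ℝ →+* ℝ[X])) * (Uᵀ.map (C : ℝ →+* ℝ[X])) = 1 := by
    rw [← Matrix.map_mul, h, Matrix.map_one _ (map_zero _) (map_one _)]
  have hcomm : U.map (C : ℝ →+* ℝ[X]) * Matrix.scalar n (X : ℝ[X]) =
      Matrix.scalar n (X : ℝ[X]) * U.map (C : ℝ →+* ℝ[X]) :=
    (Matrix.scalar_commute (X : ℝ[X]) (fun r => Commute.all _ r) _).symm
  have hch : charmatrix (U * A * Uᵀ) =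
      (U.map (C : ℝ →+* ℝ[X])) * charmatrix A * (Uᵀ.map (C : ℝ →+* ℝ[X])) := by
    unfold charmatrix
    rw [mul_sub, sub_mul]
    congr 1
    · rw [hcomm, mul_assoc, hmap, mul_one]
    · simp [RingHom.mapMatrix_apply, Matrix.map_mul]
  have h2 : ((Uᵀ.map (C : ℝ →+* ℝ[X])) * (U.map (C : ℝ →+* ℝ[X]))).det = 1 := by
    rw [det_mul, mul_comm, ← det_mul, hmap, det_one]
  rw [Matrix.charpoly, Matrix.charpoly, hch, det_mul, det_mul, mul_comm,
    ← mul_assoc, ← det_mul, h2, one_mul]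

noncomputable def cantoniU (m : ℕ) :
    Matrix (Fin m ⊕ (Unit ⊕ Fin m)) (Fin m ⊕ (Unit ⊕ Fin m)) ℝ :=
  Matrix.of fun p r =>
    match p, r with
    | Sum.inl i, Sum.inl j => if j = i then (Real.sqrt 2)⁻¹ else 0
    | Sum.inl _, Sum.inr (Sum.inl _) => 0
    | Sum.inl i, Sum.inr (Sum.inr j) => if j = i.rev then -(Real.sqrt 2)⁻¹ else 0
    | Sum.inr (Sum.inl _), Sum.inl _ => 0
    | Sum.inr (Sum.inl _), Sum.inr (Sum.inl _) => 1
    | Sum.inr (Sum.inl _), Sum.inr (Sum.inr _) => 0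
    | Sum.inr (Sum.inr i), Sum.inl j => if j = i then (Real.sqrt 2)⁻¹ else 0
    | Sum.inr (Sum.inr _), Sum.inr (Sum.inl _) => 0
    | Sum.inr (Sum.inr i), Sum.inr (Sum.inr j) => if j = i.rev then (Real.sqrt 2)⁻¹ else 0

variable {m : ℕ}

local notation "s" => (Real.sqrt 2)⁻¹

lemma s_mul_s : (Real.sqrt 2)⁻¹ * (Real.sqrt 2)⁻¹ = 1 / 2 := by
  rw [← mul_inv]
  rw [Real.mul_self_sqrt (by norm_num)]
  norm_num

-- multiplication on the right by `Uᵀ`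
lemma mulUT_inl (A : Matrix (Fin m ⊕ (Unit ⊕ Fin m)) (Fin m ⊕ (Unit ⊕ Fin m)) ℝ)
    (p) (j : Fin m) :
    (A * (cantoniU m)ᵀ) p (Sum.inl j) =
      s * A p (Sum.inl j) - s * A p (Sum.inr (Sum.inr j.rev)) := by
  simp [Matrix.mul_apply, Fintype.sum_sum_type, cantoniU, mul_ite, mul_zero,
    Finset.sum_ite_eq', eq_comm (a := j)]
  ring

lemma mulUT_mid (A : Matrix (Fin m ⊕ (Unit ⊕ Fin m)) (Fin m ⊕ (Unit ⊕ Fin m)) ℝ)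
    (p) (u : Unit) :
    (A * (cantoniU m)ᵀ) p (Sum.inr (Sum.inl u)) = A p (Sum.inr (Sum.inl ())) := by
  simp [Matrix.mul_apply, Fintype.sum_sum_type, cantoniU]

lemma mulUT_inr (A : Matrix (Fin m ⊕ (Unit ⊕ Fin m)) (Fin m ⊕ (Unit ⊕ Fin m)) ℝ)
    (p) (j : Fin m) :
    (A * (cantoniU m)ᵀ) p (Sum.inr (Sum.inr j)) =
      s * A p (Sum.inl j) + s * A p (Sum.inr (Sum.inr j.rev)) := by
  simp [Matrix.mul_apply, Fintype.sum_sum_type, cantoniU, mul_ite, mul_zero,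
    Finset.sum_ite_eq', eq_comm (a := j)]
  ring

-- multiplication on the left by `U`
lemma Umul_inl (A : Matrix (Fin m ⊕ (Unit ⊕ Fin m)) (Fin m ⊕ (Unit ⊕ Fin m)) ℝ)
    (i : Fin m) (r) :
    ((cantoniU m) * A) (Sum.inl i) r =
      s * A (Sum.inl i) r - s * A (Sum.inr (Sum.inr i.rev)) r := by
  simp [Matrix.mul_apply, Fintype.sum_sum_type, cantoniU, ite_mul, zero_mul,
    Finset.sum_ite_eq']
  ring

lemma Umul_mid (A : Matrix (Fin m ⊕ (Unit ⊕ Fin m)) (Fin m ⊕ (Unit ⊕ Fin m)) ℝ)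
    (u : Unit) (r) :
    ((cantoniU m) * A) (Sum.inr (Sum.inl u)) r = A (Sum.inr (Sum.inl ())) r := by
  simp [Matrix.mul_apply, Fintype.sum_sum_type, cantoniU]

lemma Umul_inr (A : Matrix (Fin m ⊕ (Unit ⊕ Fin m)) (Fin m ⊕ (Unit ⊕ Fin m)) ℝ)
    (i : Fin m) (r) :
    ((cantoniU m) * A) (Sum.inr (Sum.inr i)) r =
      s * A (Sum.inl i) r + s * A (Sum.inr (Sum.inr i.rev)) r := by
  simp [Matrix.mul_apply, Fintype.sum_sum_type, cantoniU, ite_mul, zero_mul,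
    Finset.sum_ite_eq']

end Aux

section Aux2
variable {m : ℕ}

lemma exchange_mul_apply (A : Matrix (Fin m) (Fin m) ℝ) (i j : Fin m) :
    (exchangeMatrix m * A) i j = A i.rev j := by
  simp [Matrix.mul_apply, exchangeMatrix, ite_mul, zero_mul, Finset.sum_ite_eq']

lemma mul_exchange_apply (A : Matrix (Fin m) (Fin m) ℝ) (i j : Fin m) :
    (A * exchangeMatrix m) i j = A i j.rev := by
  have : ∀ k : Fin m, (j = Fin.rev k) = (k = Fin.rev j) := by
    intro k
    simp [eq_comm (a := j), Fin.rev_eq_iff]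
  simp [Matrix.mul_apply, exchangeMatrix, mul_ite, mul_zero, this, Finset.sum_ite_eq']

lemma s_mul_s' : (Real.sqrt 2)⁻¹ * (Real.sqrt 2)⁻¹ = 1 / 2 := s_mul_s

lemma sqrt_two_ne_zero : Real.sqrt 2 ≠ 0 := by positivity

lemma sqrt2_sq : Real.sqrt 2 * Real.sqrt 2 = 2 := Real.mul_self_sqrt (by norm_num)

lemma sqrt2_inv_mul : Real.sqrt 2 * (Real.sqrt 2)⁻¹ = 1 :=
  mul_inv_cancel₀ sqrt_two_ne_zero

end Aux2

/-- Cantoni–Butler decomposition: an odd-dimensional real symmetric centrosymmetric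
matrix `M = [[B, x, Cᵀ], [xᵀ, q, xᵀJ], [C, Jx, JBJ]]` is orthogonally similar to
`diag(B − JC, [[B + JC, √2·x], [√2·xᵀ, q]])`; in particular its characteristic
polynomial factors as the product of those of the two blocks. -/
theorem cantoni_butler (m : ℕ) (B C : Matrix (Fin m) (Fin m) ℝ) (x : Fin m → ℝ)
    (q : ℝ) (hB : B.IsSymm)
    (hC : C = exchangeMatrix m * Cᵀ * exchangeMatrix m) :
    (∃ U : Matrix (Fin m ⊕ (Unit ⊕ Fin m)) (Fin m ⊕ (Unit ⊕ Fin m)) ℝ,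
        U * Uᵀ = 1 ∧
        U * centroMatrix m B C x q * Uᵀ =
          (Matrix.fromBlocks (B - exchangeMatrix m * C) 0 0
              (cantoniSmall m B C x q)).submatrix
            (Equiv.sumCongr (Equiv.refl (Fin m)) (Equiv.sumComm Unit (Fin m)))
            (Equiv.sumCongr (Equiv.refl (Fin m)) (Equiv.sumComm Unit (Fin m)))) ∧
      (centroMatrix m B C x q).charpoly =
        (B - exchangeMatrix m * C).charpoly * (cantoniSmall m B C x q).charpoly := by
  have hC2 : ∀ i j : Fin m, C j.rev i = C i.rev j := by
    intro i j
    conv_lhs => rw [hC]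
    rw [mul_exchange_apply, exchange_mul_apply]
    simp [Fin.rev_rev]
  have hBs : ∀ i j : Fin m, B i j = B j i := fun i j => (hB.apply i j).symm
  have hUU : cantoniU m * (cantoniU m)ᵀ = 1 := by
    ext p r
    rcases p with i | u | i <;> rcases r with j | v | j
    · rw [mulUT_inl]
      simp only [cantoniU, Matrix.of_apply, Matrix.one_apply, Sum.inl.injEq, Fin.rev_inj,
        mul_ite, mul_zero, mul_neg]
      by_cases h : j = i
      · subst h; simp; linear_combination 2 * s_mul_s
      · simp [h, Ne.symm h]
    · rw [mulUT_mid]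
      simp [cantoniU, Matrix.one_apply]
    · rw [mulUT_inr]
      simp only [cantoniU, Matrix.of_apply, Matrix.one_apply, Fin.rev_inj, mul_ite, mul_zero,
        mul_neg]
      by_cases h : j = i <;> simp [h]
    · rw [mulUT_inl]
      simp [cantoniU, Matrix.one_apply]
    · rw [mulUT_mid]
      simp [cantoniU, Matrix.one_apply]
    · rw [mulUT_inr]
      simp [cantoniU, Matrix.one_apply]
    · rw [mulUT_inl]
      simp only [cantoniU, Matrix.of_apply, Matrix.one_apply, Fin.rev_inj, mul_ite, mul_zero]
      by_cases h : j = i <;> simp [h]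
    · rw [mulUT_mid]
      simp [cantoniU, Matrix.one_apply]
    · rw [mulUT_inr]
      simp only [cantoniU, Matrix.of_apply, Matrix.one_apply, Sum.inr.injEq, Fin.rev_inj,
        mul_ite, mul_zero]
      by_cases h : j = i
      · subst h; simp; linear_combination 2 * s_mul_s
      · simp [h, Ne.symm h]
  have hUMU : cantoniU m * centroMatrix m B C x q * (cantoniU m)ᵀ =
      (Matrix.fromBlocks (B - exchangeMatrix m * C) 0 0
          (cantoniSmall m B C x q)).submatrix
        (Equiv.sumCongr (Equiv.refl (Fin m)) (Equiv.sumComm Unit (Fin m)))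
        (Equiv.sumCongr (Equiv.refl (Fin m)) (Equiv.sumComm Unit (Fin m))) := by
    ext p r
    rcases p with i | u | i <;> rcases r with j | v | j
    · rw [mulUT_inl, Umul_inl, Umul_inl]
      simp only [centroMatrix, cantoniSmall, Matrix.of_apply, Matrix.submatrix_apply,
        Equiv.sumCongr_apply, Equiv.coe_refl, Sum.map_inl, Sum.map_inr, Equiv.sumComm_apply,
        Sum.swap_inl, Sum.swap_inr, Matrix.fromBlocks_apply₁₁, Matrix.fromBlocks_apply₁₂,
        Matrix.fromBlocks_apply₂₁, Matrix.fromBlocks_apply₂₂, Matrix.transpose_apply,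
        Matrix.sub_apply, Matrix.add_apply, exchange_mul_apply, Fin.rev_rev, Matrix.zero_apply,
        id_eq]
      linear_combination (2 * B i j - 2 * C i.rev j) * s_mul_s -
        (Real.sqrt 2)⁻¹ * (Real.sqrt 2)⁻¹ * hC2 i j
    · rw [mulUT_mid, Umul_inl]
      simp only [centroMatrix, cantoniSmall, Matrix.of_apply, Matrix.submatrix_apply,
        Equiv.sumCongr_apply, Equiv.coe_refl, Sum.map_inl, Sum.map_inr, Equiv.sumComm_apply,
        Sum.swap_inl, Sum.swap_inr, Matrix.fromBlocks_apply₁₁, Matrix.fromBlocks_apply₁₂,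
        Matrix.fromBlocks_apply₂₁, Matrix.fromBlocks_apply₂₂, Matrix.transpose_apply,
        Matrix.sub_apply, Matrix.add_apply, exchange_mul_apply, Fin.rev_rev, Matrix.zero_apply,
        id_eq]
      ring
    · rw [mulUT_inr, Umul_inl, Umul_inl]
      simp only [centroMatrix, cantoniSmall, Matrix.of_apply, Matrix.submatrix_apply,
        Equiv.sumCongr_apply, Equiv.coe_refl, Sum.map_inl, Sum.map_inr, Equiv.sumComm_apply,
        Sum.swap_inl, Sum.swap_inr, Matrix.fromBlocks_apply₁₁, Matrix.fromBlocks_apply₁₂,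
        Matrix.fromBlocks_apply₂₁, Matrix.fromBlocks_apply₂₂, Matrix.transpose_apply,
        Matrix.sub_apply, Matrix.add_apply, exchange_mul_apply, Fin.rev_rev, Matrix.zero_apply,
        id_eq]
      linear_combination (Real.sqrt 2)⁻¹ * (Real.sqrt 2)⁻¹ * hC2 i j
    · rw [mulUT_inl, Umul_mid, Umul_mid]
      simp only [centroMatrix, cantoniSmall, Matrix.of_apply, Matrix.submatrix_apply,
        Equiv.sumCongr_apply, Equiv.coe_refl, Sum.map_inl, Sum.map_inr, Equiv.sumComm_apply,
        Sum.swap_inl, Sum.swap_inr, Matrix.fromBlocks_apply₁₁, Matrix.fromBlocks_apply₁₂,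
        Matrix.fromBlocks_apply₂₁, Matrix.fromBlocks_apply₂₂, Matrix.transpose_apply,
        Matrix.sub_apply, Matrix.add_apply, exchange_mul_apply, Fin.rev_rev, Matrix.zero_apply,
        id_eq]
      ring
    · rw [mulUT_mid, Umul_mid]
      simp only [centroMatrix, cantoniSmall, Matrix.of_apply, Matrix.submatrix_apply,
        Equiv.sumCongr_apply, Equiv.coe_refl, Sum.map_inl, Sum.map_inr, Equiv.sumComm_apply,
        Sum.swap_inl, Sum.swap_inr, Matrix.fromBlocks_apply₁₁, Matrix.fromBlocks_apply₁₂,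
        Matrix.fromBlocks_apply₂₁, Matrix.fromBlocks_apply₂₂, Matrix.transpose_apply,
        Matrix.sub_apply, Matrix.add_apply, exchange_mul_apply, Fin.rev_rev, Matrix.zero_apply,
        id_eq]
    · rw [mulUT_inr, Umul_mid, Umul_mid]
      simp only [centroMatrix, cantoniSmall, Matrix.of_apply, Matrix.submatrix_apply,
        Equiv.sumCongr_apply, Equiv.coe_refl, Sum.map_inl, Sum.map_inr, Equiv.sumComm_apply,
        Sum.swap_inl, Sum.swap_inr, Matrix.fromBlocks_apply₁₁, Matrix.fromBlocks_apply₁₂,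
        Matrix.fromBlocks_apply₂₁, Matrix.fromBlocks_apply₂₂, Matrix.transpose_apply,
        Matrix.sub_apply, Matrix.add_apply, exchange_mul_apply, Fin.rev_rev, Matrix.zero_apply,
        id_eq]
      linear_combination (Real.sqrt 2 * x j) * sqrt2_inv_mul -
        ((Real.sqrt 2)⁻¹ * x j) * sqrt2_sq
    · rw [mulUT_inl, Umul_inr, Umul_inr]
      simp only [centroMatrix, cantoniSmall, Matrix.of_apply, Matrix.submatrix_apply,
        Equiv.sumCongr_apply, Equiv.coe_refl, Sum.map_inl, Sum.map_inr, Equiv.sumComm_apply,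
        Sum.swap_inl, Sum.swap_inr, Matrix.fromBlocks_apply₁₁, Matrix.fromBlocks_apply₁₂,
        Matrix.fromBlocks_apply₂₁, Matrix.fromBlocks_apply₂₂, Matrix.transpose_apply,
        Matrix.sub_apply, Matrix.add_apply, exchange_mul_apply, Fin.rev_rev, Matrix.zero_apply,
        id_eq]
      linear_combination (-((Real.sqrt 2)⁻¹ * (Real.sqrt 2)⁻¹)) * hC2 i j
    · rw [mulUT_mid, Umul_inr]
      simp only [centroMatrix, cantoniSmall, Matrix.of_apply, Matrix.submatrix_apply,
        Equiv.sumCongr_apply, Equiv.coe_refl, Sum.map_inl, Sum.map_inr, Equiv.sumComm_apply,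
        Sum.swap_inl, Sum.swap_inr, Matrix.fromBlocks_apply₁₁, Matrix.fromBlocks_apply₁₂,
        Matrix.fromBlocks_apply₂₁, Matrix.fromBlocks_apply₂₂, Matrix.transpose_apply,
        Matrix.sub_apply, Matrix.add_apply, exchange_mul_apply, Fin.rev_rev, Matrix.zero_apply,
        id_eq]
      linear_combination (Real.sqrt 2 * x i) * sqrt2_inv_mul -
        ((Real.sqrt 2)⁻¹ * x i) * sqrt2_sq
    · rw [mulUT_inr, Umul_inr, Umul_inr]
      simp only [centroMatrix, cantoniSmall, Matrix.of_apply, Matrix.submatrix_apply,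
        Equiv.sumCongr_apply, Equiv.coe_refl, Sum.map_inl, Sum.map_inr, Equiv.sumComm_apply,
        Sum.swap_inl, Sum.swap_inr, Matrix.fromBlocks_apply₁₁, Matrix.fromBlocks_apply₁₂,
        Matrix.fromBlocks_apply₂₁, Matrix.fromBlocks_apply₂₂, Matrix.transpose_apply,
        Matrix.sub_apply, Matrix.add_apply, exchange_mul_apply, Fin.rev_rev, Matrix.zero_apply,
        id_eq]
      linear_combination (2 * B i j + 2 * C i.rev j) * s_mul_s +
        (Real.sqrt 2)⁻¹ * (Real.sqrt 2)⁻¹ * hC2 i j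
  refine ⟨⟨cantoniU m, hUU, hUMU⟩, ?_⟩
  have hcp := charpoly_conj_orth (cantoniU m) (centroMatrix m B C x q) hUU
  rw [hUMU] at hcp
  rw [← hcp]
  have hre : (Matrix.fromBlocks (B - exchangeMatrix m * C) 0 0
          (cantoniSmall m B C x q)).submatrix
        ⇑(Equiv.sumCongr (Equiv.refl (Fin m)) (Equiv.sumComm Unit (Fin m)))
        ⇑(Equiv.sumCongr (Equiv.refl (Fin m)) (Equiv.sumComm Unit (Fin m))) =
      Matrix.reindex (Equiv.sumCongr (Equiv.refl (Fin m)) (Equiv.sumComm Unit (Fin m))).symm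
        (Equiv.sumCongr (Equiv.refl (Fin m)) (Equiv.sumComm Unit (Fin m))).symm
        (Matrix.fromBlocks (B - exchangeMatrix m * C) 0 0 (cantoniSmall m B C x q)) := rfl
  rw [hre, Matrix.charpoly_reindex, Matrix.charpoly_fromBlocks_zero₁₂]
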